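/- arXiv:1505.06813 — 7 statements merged into one kernel-verified Lean document; each statement's English description precedes it below -/
import Mathlib

section
/- Let y ∈ {0,1}^n be a label vector with n_+ = Σ_i y_i positives, let k ≤ n_+, and let s ∈ ℝ^n be a score vector. Define the ramp surrogate ℓ^ramp(s) = max_{ŷ ∈ {0,1}^n, Σŷ_i = k} (Δ(y,ŷ) + Σ_i ŷ_i s_i) − max_{ỹ ∈ {0,1}^n, Σỹ_i = k, K(y,ỹ) = k} Σ_i ỹ_i s_i, where Δ(y,ŷ) = Σ_i (1−y_i)ŷ_i and K(y,ỹ) = Σ_i y_i ỹ_i. Let σ be a permutation sorting s in decreasing order and define Prec@k(s) = Σ_{i=1}^{k} (1 − y_{σ(i)}). Then ℓ^ramp(s) ≥ Prec@k(s). -/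
open Finset

private lemma strictMono_fin_le {k n : ℕ} (f : Fin k → Fin n) (hf : StrictMono f)
    (j : Fin k) : (j : ℕ) ≤ (f j : ℕ) := by
  suffices h : ∀ m (j : Fin k), (j : ℕ) = m → m ≤ (f j : ℕ) from h _ j rfl
  intro m
  induction m with
  | zero => intro j _; exact Nat.zero_le _
  | succ m ih =>
    intro j hm
    have hmk : m < k := lt_trans (hm ▸ Nat.lt_succ_self m) j.2
    have hlt : (⟨m, hmk⟩ : Fin k) < j := by
      rw [Fin.lt_def, hm]; exact Nat.lt_succ_self m
    have h1 : (f ⟨m, hmk⟩ : ℕ) < (f j : ℕ) := hf hlt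
    have h2 := ih ⟨m, hmk⟩ rfl
    omega

/-- The ramp surrogate upper bounds Prec@k.  Labels are encoded by the set `P` of
positive indices; candidate labelings `ŷ` with `Σ ŷ_i = k` are encoded as subsets
of cardinality `k`; `Δ(y,ŷ) = |Ŷ \ P|`; the constraint `K(y,ỹ) = k` means `Ỹ ⊆ P`.
`σ` sorts the scores in decreasing order, so `Prec@k(s)` is the number of indices
among the top `k` positions that are not positive. -/
theorem ramp_upper_bounds_prec (n k : ℕ) (s : Fin n → ℝ) (P : Finset (Fin n))
    (hk : k ≤ P.card) (σ : Equiv.Perm (Fin n))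
    (hσ : ∀ i j : Fin n, i ≤ j → s (σ j) ≤ s (σ i))
    (h1 : (Finset.powersetCard k (Finset.univ : Finset (Fin n))).Nonempty)
    (h2 : (Finset.powersetCard k P).Nonempty) :
    ((Finset.univ.filter (fun i : Fin n => (i : ℕ) < k ∧ σ i ∉ P)).card : ℝ) ≤
      (Finset.powersetCard k (Finset.univ : Finset (Fin n))).sup' h1
          (fun Y => ((Y \ P).card : ℝ) + ∑ i ∈ Y, s i) -
        (Finset.powersetCard k P).sup' h2 (fun Y => ∑ i ∈ Y, s i) := by
  have hkn : k ≤ n := hk.trans (by simpa using P.card_le_univ)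
  set I : Finset (Fin n) := univ.filter (fun i : Fin n => (i : ℕ) < k) with hI
  have hImap : I = (univ : Finset (Fin k)).map (Fin.castLEEmb hkn) := by
    ext i
    simp only [hI, mem_filter, mem_univ, true_and, mem_map, Fin.castLEEmb_apply]
    constructor
    · intro h
      exact ⟨⟨i, h⟩, rfl⟩
    · rintro ⟨j, rfl⟩; simp
  have hIcard : I.card = k := by rw [hImap]; simp
  set T : Finset (Fin n) := I.image σ with hT
  have hTcard : T.card = k := by
    rw [hT, card_image_of_injective _ σ.injective, hIcard]
  have hTmem : T ∈ Finset.powersetCard k (Finset.univ : Finset (Fin n)) := by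
    rw [mem_powersetCard]; exact ⟨subset_univ _, hTcard⟩
  -- T is a maximizing k-subset for s
  have hmax : ∀ Y : Finset (Fin n), Y.card = k → ∑ i ∈ Y, s i ≤ ∑ i ∈ T, s i := by
    intro Y hY
    have hTsum : ∑ i ∈ T, s i = ∑ j : Fin k, s (σ (Fin.castLE hkn j)) := by
      rw [hT, sum_image (fun a _ b _ h => σ.injective h), hImap, sum_map]
      rfl
    set Z : Finset (Fin n) := Y.image σ.symm with hZ
    have hZcard : Z.card = k := by
      rw [hZ, card_image_of_injective _ σ.symm.injective, hY]
    have hYsum : ∑ i ∈ Y, s i = ∑ i ∈ Z, s (σ i) := by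
      rw [hZ, sum_image (fun a _ b _ h => σ.symm.injective h)]
      simp
    set e := Z.orderEmbOfFin hZcard with he
    have hZmap : Z = (univ : Finset (Fin k)).map e.toEmbedding := by
      ext a
      simp only [mem_map, mem_univ, true_and, RelEmbedding.coe_toEmbedding]
      constructor
      · intro ha
        have : a ∈ Set.range e := by rw [he, Finset.range_orderEmbOfFin]; exact ha
        obtain ⟨j, hj⟩ := this
        exact ⟨j, hj⟩
      · rintro ⟨j, rfl⟩; exact Finset.orderEmbOfFin_mem _ _ _
    have hZsum : ∑ i ∈ Z, s (σ i) = ∑ j : Fin k, s (σ (e j)) := by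
      rw [hZmap, sum_map]; rfl
    rw [hYsum, hZsum, hTsum]
    apply Finset.sum_le_sum
    intro j _
    apply hσ
    have : (j : ℕ) ≤ (e j : ℕ) := strictMono_fin_le e e.strictMono j
    exact Fin.le_def.mpr (by simpa using this)
  -- lower bound for sup1
  have hs1 : ((T \ P).card : ℝ) + ∑ i ∈ T, s i ≤
      (Finset.powersetCard k (Finset.univ : Finset (Fin n))).sup' h1
        (fun Y => ((Y \ P).card : ℝ) + ∑ i ∈ Y, s i) :=
    le_sup' (fun Y => ((Y \ P).card : ℝ) + ∑ i ∈ Y, s i) hTmem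
  -- upper bound for sup2
  have hs2 : (Finset.powersetCard k P).sup' h2 (fun Y => ∑ i ∈ Y, s i) ≤ ∑ i ∈ T, s i := by
    apply sup'_le
    intro Y hY
    rw [mem_powersetCard] at hY
    exact hmax Y hY.2
  -- card equality
  have hcard : (Finset.univ.filter (fun i : Fin n => (i : ℕ) < k ∧ σ i ∉ P)).card
      = (T \ P).card := by
    have : T \ P = (I.filter (fun i => σ i ∉ P)).image σ := by
      ext a
      simp only [hT, mem_sdiff, mem_image, mem_filter]
      constructor
      · rintro ⟨⟨i, hi, rfl⟩, ha⟩; exact ⟨i, ⟨hi, ha⟩, rfl⟩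
      · rintro ⟨i, ⟨hi, ha⟩, rfl⟩; exact ⟨⟨i, hi, rfl⟩, ha⟩
    rw [this, card_image_of_injective _ σ.injective, hI, filter_filter]
  rw [hcard]
  linarith
end

section
/- Let y ∈ {0,1}^n with n_+ = Σ y_i positives, k ≤ n_+, and s ∈ ℝ^n. If ℓ^ramp(s) ≤ ξ, then there exists a set S ⊂ {1,...,n} with |S| ≤ k (namely the indices of the k highest scoring positives) such that for every ŷ ∈ {0,1}^n with Σ ŷ_i = k, one has Σ_{i∈S} s_i ≥ Σ_i ŷ_i s_i + Δ(y,ŷ) − ξ. -/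
open Finset

/-- If the ramp surrogate is at most `ξ`, then there is a set `S` of at most `k`
(positive) indices whose total score dominates `Σ ŷ_i s_i + Δ(y,ŷ) - ξ` for every
candidate labeling `ŷ` with `Σ ŷ_i = k`. -/
theorem ramp_small_implies_dominating_set (n k : ℕ) (s : Fin n → ℝ) (P : Finset (Fin n))
    (hk : k ≤ P.card) (ξ : ℝ)
    (h1 : (Finset.powersetCard k (Finset.univ : Finset (Fin n))).Nonempty)
    (h2 : (Finset.powersetCard k P).Nonempty)
    (hramp :
      (Finset.powersetCard k (Finset.univ : Finset (Fin n))).sup' h1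
          (fun Y => ((Y \ P).card : ℝ) + ∑ i ∈ Y, s i) -
        (Finset.powersetCard k P).sup' h2 (fun Y => ∑ i ∈ Y, s i) ≤ ξ) :
    ∃ S : Finset (Fin n), S.card ≤ k ∧
      ∀ Y ∈ Finset.powersetCard k (Finset.univ : Finset (Fin n)),
        ∑ i ∈ S, s i ≥ (∑ i ∈ Y, s i) + ((Y \ P).card : ℝ) - ξ := by
  obtain ⟨S, hS, hSmax⟩ := Finset.exists_mem_eq_sup' h2 (fun Y => ∑ i ∈ Y, s i)
  refine ⟨S, ?_, ?_⟩
  · exact le_of_eq (Finset.mem_powersetCard.mp hS).2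
  · intro Y hY
    have hf : ((Y \ P).card : ℝ) + ∑ i ∈ Y, s i ≤
        (Finset.powersetCard k (Finset.univ : Finset (Fin n))).sup' h1
          (fun Y => ((Y \ P).card : ℝ) + ∑ i ∈ Y, s i) :=
      Finset.le_sup' (fun Y => ((Y \ P).card : ℝ) + ∑ i ∈ Y, s i) hY
    have := hSmax ▸ hramp
    linarith
end

section
/- Let y ∈ {0,1}^n, k ≤ n_+ = Σ y_i, and s ∈ ℝ^n. Suppose s realizes the weak k-margin: there exists a set S_+ of k positive indices (y_i = 1 for i ∈ S_+) such that min_{i∈S_+} s_i − max_{j: y_j = 0} s_j ≥ 1. Then ℓ^ramp(s) ≤ 0, and consequently Prec@k(s) = 0. -/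
open Finset

/-- Under the weak k-margin condition (some `k` positives outscore every negative
by at least 1), the ramp surrogate is nonpositive and Prec@k is zero. -/
theorem weak_margin_implies_ramp_zero (n k : ℕ) (s : Fin n → ℝ) (P : Finset (Fin n))
    (hk : k ≤ P.card) (σ : Equiv.Perm (Fin n))
    (hσ : ∀ i j : Fin n, i ≤ j → s (σ j) ≤ s (σ i))
    (hneg : ∃ j : Fin n, j ∉ P)
    (h1 : (Finset.powersetCard k (Finset.univ : Finset (Fin n))).Nonempty)
    (h2 : (Finset.powersetCard k P).Nonempty)
    (hmargin : ∃ S : Finset (Fin n), S ⊆ P ∧ S.card = k ∧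
      ∀ i ∈ S, ∀ j : Fin n, j ∉ P → s i - s j ≥ 1) :
    (Finset.powersetCard k (Finset.univ : Finset (Fin n))).sup' h1
          (fun Y => ((Y \ P).card : ℝ) + ∑ i ∈ Y, s i) -
        (Finset.powersetCard k P).sup' h2 (fun Y => ∑ i ∈ Y, s i) ≤ 0 ∧
      ((Finset.univ.filter (fun i : Fin n => (i : ℕ) < k ∧ σ i ∉ P)).card : ℝ) = 0 := by
  obtain ⟨S, hSP, hScard, hS⟩ := hmargin
  constructor
  · rw [sub_nonpos]
    apply Finset.sup'_le
    intro Y hY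
    rw [Finset.mem_powersetCard] at hY
    obtain ⟨-, hYcard⟩ := hY
    set A := Y ∩ P with hA
    set N := Y \ P with hN
    have hdisj : Disjoint A N := Finset.disjoint_sdiff.mono_left Finset.inter_subset_right
    have hsplit : A ∪ N = Y := by ext x; simp only [hA, hN, Finset.mem_union, Finset.mem_inter, Finset.mem_sdiff]; tauto
    have hcardAN : A.card + N.card = k := by
      rw [← Finset.card_union_of_disjoint hdisj, hsplit, hYcard]
    have hm : N.card ≤ (S \ A).card := by
      have h := Finset.le_card_sdiff A S
      omega
    obtain ⟨T, hTsub, hTcard⟩ := Finset.exists_subset_card_eq hm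
    have hTS : T ⊆ S := hTsub.trans Finset.sdiff_subset
    have hkey : ∀ j ∈ N, ∀ i ∈ T, s j ≤ s i - 1 := by
      intro j hj i hi
      have hjP : j ∉ P := (Finset.mem_sdiff.mp hj).2
      have := hS i (hTS hi) j hjP
      linarith
    have hsum : ∑ j ∈ N, s j ≤ ∑ i ∈ T, (s i - 1) := by
      rcases N.eq_empty_or_nonempty with h | h
      · have hT0 : T = ∅ := Finset.card_eq_zero.mp (by rw [hTcard, h]; simp)
        simp [h, hT0]
      · have hT : T.Nonempty := by
          rw [← Finset.card_pos, hTcard, Finset.card_pos]; exact h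
        set b := T.inf' hT (fun i => s i - 1) with hb
        calc ∑ j ∈ N, s j ≤ N.card • b := by
              apply Finset.sum_le_card_nsmul
              intro j hj
              exact Finset.le_inf' hT _ (fun i hi => hkey j hj i hi)
          _ = T.card • b := by rw [hTcard]
          _ ≤ ∑ i ∈ T, (s i - 1) := Finset.card_nsmul_le_sum T _ _
              (fun i hi => Finset.inf'_le _ hi)
    have hsum' : ∑ i ∈ T, (s i - 1) = ∑ i ∈ T, s i - N.card := by
      rw [Finset.sum_sub_distrib]
      simp [hTcard]
    have hdisjAT : Disjoint A T := by
      refine Finset.disjoint_left.mpr fun x hxA hxT => ?_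
      exact (Finset.mem_sdiff.mp (hTsub hxT)).2 hxA
    refine Finset.le_sup'_of_le _ (b := A ∪ T) ?_ ?_
    · rw [Finset.mem_powersetCard]
      refine ⟨Finset.union_subset (Finset.inter_subset_right) (hTS.trans hSP), ?_⟩
      rw [Finset.card_union_of_disjoint hdisjAT, hTcard]; omega
    · have hYsum : ∑ i ∈ Y, s i = ∑ i ∈ A, s i + ∑ i ∈ N, s i := by
        rw [← hsplit, Finset.sum_union hdisj]
      show ((N.card : ℝ)) + ∑ i ∈ Y, s i ≤ ∑ i ∈ A ∪ T, s i
      rw [Finset.sum_union hdisjAT, hYsum]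
      linarith
  · norm_cast
    rw [Finset.card_eq_zero, Finset.eq_empty_iff_forall_notMem]
    intro i hi
    rw [Finset.mem_filter] at hi
    obtain ⟨-, hik, hiP⟩ := hi
    have hsub : S ⊆ (Finset.Iio i).image σ := by
      intro x hx
      have hx1 := hS x hx (σ i) hiP
      refine Finset.mem_image.2 ⟨σ.symm x, ?_, by simp⟩
      rw [Finset.mem_Iio]
      by_contra hle
      have hle' : i ≤ σ.symm x := le_of_not_gt hle
      have := hσ i (σ.symm x) hle'
      simp only [Equiv.apply_symm_apply] at this
      linarith
    have hc := Finset.card_le_card hsub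
    rw [Finset.card_image_of_injective _ σ.injective, hScard] at hc
    have : (Finset.Iio i).card = (i : ℕ) := by
      simp [Fin.card_Iio]
    omega
end

section
/- Let y ∈ {0,1}^n with n_+ = Σ y_i positives, k ≤ n_+ with k < n_+ when needed, and s ∈ ℝ^n. Define for each ŷ ∈ {0,1}^n with Σ ŷ_i = k: C(ŷ) = (n_+ − K(y,ŷ))/(n_+ − k) (when k < n_+), and the avg surrogate ℓ^avg(s) = max_{Σŷ=k} { Δ(y,ŷ) + Σ_i (ŷ_i − y_i)s_i + (1/C(ŷ))·Σ_i (1−ŷ_i)y_i s_i }. Then ℓ^avg(s) ≥ Prec@k(s). -/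
open Finset

/-- The avg surrogate upper bounds Prec@k.  For each candidate labeling `Y` of
cardinality `k`, `C(Y) = (n₊ - |Y ∩ P|)/(n₊ - k)`, and the avg surrogate term is
`Δ(y,Y) + Σ(ŷᵢ - yᵢ)sᵢ + (1/C(Y))·Σ_{P \ Y} sᵢ`. -/
theorem avg_upper_bounds_prec (n k : ℕ) (s : Fin n → ℝ) (P : Finset (Fin n))
    (hk : k < P.card) (σ : Equiv.Perm (Fin n))
    (hσ : ∀ i j : Fin n, i ≤ j → s (σ j) ≤ s (σ i))
    (h1 : (Finset.powersetCard k (Finset.univ : Finset (Fin n))).Nonempty) :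
    ((Finset.univ.filter (fun i : Fin n => (i : ℕ) < k ∧ σ i ∉ P)).card : ℝ) ≤
      (Finset.powersetCard k (Finset.univ : Finset (Fin n))).sup' h1
        (fun Y => ((Y \ P).card : ℝ) + ((∑ i ∈ Y, s i) - ∑ i ∈ P, s i) +
          (((P.card : ℝ) - (k : ℝ)) / ((P.card : ℝ) - ((Y ∩ P).card : ℝ))) *
            ∑ i ∈ P \ Y, s i) := by
  classical
  have hkn : k < n := lt_of_lt_of_le hk (by simpa using Finset.card_le_card (Finset.subset_univ P))
  set F : Finset (Fin n) := Finset.univ.filter (fun i => (i : ℕ) < k) with hF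
  set T : Finset (Fin n) := F.image σ with hT
  have hFcard : F.card = k := by
    have : F = Finset.Iio (⟨k, hkn⟩ : Fin n) := by
      ext i; simp [hF, Fin.lt_def]
    rw [this, Fin.card_Iio]
  have hTcard : T.card = k := by
    rw [hT, Finset.card_image_of_injective _ σ.injective, hFcard]
  have hTmem : T ∈ Finset.powersetCard k (Finset.univ : Finset (Fin n)) := by
    rw [Finset.mem_powersetCard]
    exact ⟨Finset.subset_univ T, hTcard⟩
  refine le_trans ?_ (Finset.le_sup' _ hTmem)
  -- card of LHS equals (T \ P).card
  have hLHS : (Finset.univ.filter (fun i : Fin n => (i : ℕ) < k ∧ σ i ∉ P)).card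
      = (T \ P).card := by
    have hset : T \ P = (Finset.univ.filter (fun i : Fin n => (i : ℕ) < k ∧ σ i ∉ P)).image σ := by
      ext x
      simp only [hT, hF, Finset.mem_sdiff, Finset.mem_image, Finset.mem_filter,
        Finset.mem_univ, true_and]
      constructor
      · rintro ⟨⟨i, hi, rfl⟩, hx⟩; exact ⟨i, ⟨hi, hx⟩, rfl⟩
      · rintro ⟨i, ⟨hi, hx⟩, rfl⟩; exact ⟨⟨i, hi, rfl⟩, hx⟩
    rw [hset, Finset.card_image_of_injective _ σ.injective]
  rw [hLHS]
  -- key pointwise inequality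
  have hpt : ∀ x ∈ T, ∀ y ∉ T, s y ≤ s x := by
    intro x hx y hy
    rw [hT, Finset.mem_image] at hx
    obtain ⟨i, hi, rfl⟩ := hx
    have hik : (i : ℕ) < k := by simpa [hF] using hi
    have hjk : k ≤ ((σ.symm y : Fin n) : ℕ) := by
      by_contra h
      push_neg at h
      exact hy (by rw [hT, Finset.mem_image]; exact ⟨σ.symm y, by simp [hF, h], by simp⟩)
    have := hσ i (σ.symm y) (by rw [Fin.le_def]; omega)
    simpa using this
  set a : ℕ := (T \ P).card with ha
  set b : ℕ := (P \ T).card with hb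
  have hI1 : a + (T ∩ P).card = k := by
    rw [ha, ← hTcard]; exact Finset.card_sdiff_add_card_inter T P
  have hI2 : b + (P ∩ T).card = P.card := Finset.card_sdiff_add_card_inter P T
  have hInter : (P ∩ T).card = (T ∩ P).card := by rw [Finset.inter_comm]
  have hbpos : 0 < b := by omega
  -- key sum inequality: b * Σ_{T\P} s ≥ a * Σ_{P\T} s
  have hkey : (a : ℝ) * ∑ i ∈ P \ T, s i ≤ (b : ℝ) * ∑ i ∈ T \ P, s i := by
    have : ∑ x ∈ T \ P, ∑ y ∈ P \ T, s y ≤ ∑ x ∈ T \ P, ∑ y ∈ P \ T, s x := by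
      refine Finset.sum_le_sum fun x hx => Finset.sum_le_sum fun y hy => ?_
      exact hpt x (Finset.mem_sdiff.mp hx).1 y (fun h => (Finset.mem_sdiff.mp hy).2 h)
    simpa [Finset.sum_const, nsmul_eq_mul, mul_comm, Finset.mul_sum, Finset.sum_comm] using this
  -- now the algebra
  have hsum : ∑ i ∈ T, s i - ∑ i ∈ P, s i = ∑ i ∈ T \ P, s i - ∑ i ∈ P \ T, s i := by
    have h1' : ∑ i ∈ T ∩ P, s i + ∑ i ∈ T \ P, s i = ∑ i ∈ T, s i :=
      Finset.sum_inter_add_sum_sdiff T P s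
    have h2' : ∑ i ∈ P ∩ T, s i + ∑ i ∈ P \ T, s i = ∑ i ∈ P, s i :=
      Finset.sum_inter_add_sum_sdiff P T s
    rw [Finset.inter_comm] at h2'
    linarith
  have hcard : ((P.card : ℝ) - ((T ∩ P).card : ℝ)) = (b : ℝ) := by
    push_cast [← hI2, hInter]; ring
  have hck : ((P.card : ℝ) - (k : ℝ)) = (b : ℝ) - (a : ℝ) := by
    have : (k : ℝ) = (a : ℝ) + ((T ∩ P).card : ℝ) := by exact_mod_cast hI1.symm
    rw [this, hcard.symm]; ring
  simp only [hsum, hcard, hck]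
  have hb0 : (0 : ℝ) < (b : ℝ) := by exact_mod_cast hbpos
  rw [div_mul_eq_mul_div]
  have h0 : (0:ℝ) ≤ ((b : ℝ) * ∑ i ∈ T \ P, s i - (a : ℝ) * ∑ i ∈ P \ T, s i) / b :=
    div_nonneg (by linarith) hb0.le
  have heq : (∑ i ∈ T \ P, s i - ∑ i ∈ P \ T, s i) + ((b : ℝ) - a) * (∑ i ∈ P \ T, s i) / b
      = ((b : ℝ) * ∑ i ∈ T \ P, s i - (a : ℝ) * ∑ i ∈ P \ T, s i) / b := by
    field_simp
    ring
  linarith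
end

section
/- Let y ∈ {0,1}^n with n_+ positives, k ≤ n_+, and s ∈ ℝ^n. Suppose s realizes the k-margin: for every set S_+ of n_+ − k + 1 positive indices, (1/(n_+ − k + 1))·Σ_{i∈S_+} s_i − max_{j: y_j=0} s_j ≥ 1. Then ℓ^avg(s) ≤ 0, and consequently Prec@k(s) = 0. -/
/-!
The margin condition bounds `1 + s j`, for every negative `j`, by the average score of any
`n₊ - k + 1` positives, and removing a maximal element at a time extends this bound to the
average over any larger set of positives. For a prediction `Y`, applied to the positives that `Y`
misses it bounds `1 + s j` for each false positive `j ∈ Y`, which is exactly what makes the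
`Y`-term of `ℓ^avg` nonpositive. Applied to the positives scoring below `1 + s j`, it shows that at
least `k` positives outrank every negative `j`, so the top `k` ranked items are all positive.
-/

open Finset

theorem Finset.card_nsmul_le_sum_of_forall_powersetCard {ι M : Type*} [DecidableEq ι]
    [AddCommMonoid M] [LinearOrder M] [IsOrderedCancelAddMonoid M] {T : Finset ι} {m : ℕ}
    {f : ι → M} {c : M} (hm : 0 < m) (hmT : m ≤ #T)
    (h : ∀ S ∈ T.powersetCard m, m • c ≤ ∑ i ∈ S, f i) :
    #T • c ≤ ∑ i ∈ T, f i := by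
  obtain ⟨d, hd⟩ := Nat.exists_eq_add_of_le hmT
  induction d generalizing T with
  | zero => exact hd ▸ h T (mem_powersetCard.2 ⟨subset_rfl, hd⟩)
  | succ d ih =>
    obtain ⟨x, hxT, hmax⟩ := T.exists_max_image f (card_pos.1 (by omega))
    have hcard : #(T.erase x) = m + d := by rw [card_erase_of_mem hxT]; omega
    have hrest : #(T.erase x) • c ≤ ∑ i ∈ T.erase x, f i :=
      ih (by omega) (fun S hS => h S (powersetCard_mono (erase_subset x T) hS)) hcard
    have hcx : c ≤ f x := by
      refine le_of_nsmul_le_nsmul_right (n := #(T.erase x)) (by omega) (hrest.trans ?_)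
      exact sum_le_card_nsmul _ _ _ fun i hi => hmax i (mem_of_mem_erase hi)
    rw [← add_sum_erase T f hxT, ← card_erase_add_one hxT, succ_nsmul, add_comm (f x)]
    exact add_le_add hrest hcx

theorem Fin.card_le_of_forall_lt_comp_perm {β : Type*} [LinearOrder β] {n : ℕ} {s : Fin n → β}
    {σ : Equiv.Perm (Fin n)} (hσ : Antitone (s ∘ σ)) {Q : Finset (Fin n)} {i : Fin n}
    (hQ : ∀ q ∈ Q, s (σ i) < s q) : #Q ≤ i := by
  have hmaps : ∀ q ∈ Q, σ.symm q ∈ Iio i := fun q hq => mem_Iio.2 <| lt_of_not_ge fun hiq =>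
    (hQ q hq).not_ge (by simpa using hσ hiq)
  simpa using card_le_card_of_injOn σ.symm hmaps σ.symm.injective.injOn

section KMargin

variable {α : Type*} {s : α → ℝ} {P : Finset α} {k : ℕ}

def HasKMargin (s : α → ℝ) (P : Finset α) (k : ℕ) : Prop :=
  ∀ S ∈ P.powersetCard (#P - k + 1), ∀ j, j ∉ P →
    (1 / ((#P : ℝ) - (k : ℝ) + 1)) * (∑ i ∈ S, s i) - s j ≥ 1

theorem HasKMargin.card_mul_le_sum [DecidableEq α] (h : HasKMargin s P k) (hk : k ≤ #P)
    {T : Finset α} (hTP : T ⊆ P) (hT : #P - k + 1 ≤ #T) {j : α} (hj : j ∉ P) :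
    #T * (1 + s j) ≤ ∑ i ∈ T, s i := by
  have hm : ((#P - k + 1 : ℕ) : ℝ) = #P - k + 1 := by push_cast [Nat.cast_sub hk]; ring
  have hmpos : (0 : ℝ) < #P - k + 1 := by rw [← hm]; positivity
  rw [← nsmul_eq_mul]
  refine card_nsmul_le_sum_of_forall_powersetCard (Nat.succ_pos _) hT fun S hS => ?_
  have hS' := h S (powersetCard_mono hTP hS) j hj
  rw [nsmul_eq_mul, hm]
  rw [ge_iff_le, le_sub_iff_add_le', one_div, le_inv_mul_iff₀ hmpos] at hS'
  linarith

variable [DecidableEq α]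

/-- `P` is the support of `y` (the positives) and `Y` that of `ŷ`; `ℓ^avg(s)` is the maximum of
this term over `#Y = k`. -/
noncomputable def avgLossTerm (s : α → ℝ) (P : Finset α) (k : ℕ) (Y : Finset α) : ℝ :=
  (#(Y \ P) : ℝ) + ((∑ i ∈ Y, s i) - ∑ i ∈ P, s i) +
    (((#P : ℝ) - (k : ℝ)) / ((#P : ℝ) - (#(Y ∩ P) : ℝ))) * ∑ i ∈ P \ Y, s i

theorem HasKMargin.avgLossTerm_nonpos (h : HasKMargin s P k) (hk : k < #P) {Y : Finset α}
    (hY : #Y = k) : avgLossTerm s P k Y ≤ 0 := by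
  have hab : #(Y ∩ P) + #(Y \ P) = k := by rw [card_inter_add_card_sdiff, hY]
  have hmissed : #(P \ Y) + #(Y ∩ P) = #P := by
    rw [inter_comm, add_comm, card_inter_add_card_sdiff]
  have hbound : ∀ j ∈ Y \ P, #(P \ Y) * (1 + s j) ≤ ∑ i ∈ P \ Y, s i := fun j hj =>
    h.card_mul_le_sum hk.le sdiff_subset (by have := card_pos.2 ⟨j, hj⟩; omega)
      (mem_sdiff.1 hj).2
  have hsum : #(P \ Y) * (#(Y \ P) + ∑ j ∈ Y \ P, s j) ≤ #(Y \ P) * ∑ i ∈ P \ Y, s i := by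
    have := sum_le_sum hbound
    rw [sum_const, nsmul_eq_mul, ← mul_sum, sum_add_distrib, sum_const, nsmul_one] at this
    linarith
  have hD : (0 : ℝ) < #(P \ Y) := by exact_mod_cast (show 0 < #(P \ Y) by omega)
  have habR : (#(Y ∩ P) : ℝ) + #(Y \ P) = k := by exact_mod_cast hab
  have hmissedR : (#(P \ Y) : ℝ) + #(Y ∩ P) = #P := by exact_mod_cast hmissed
  rw [avgLossTerm, ← sum_inter_add_sum_sdiff Y P, ← sum_inter_add_sum_sdiff P Y, inter_comm P Y,
    show (#P : ℝ) - #(Y ∩ P) = #(P \ Y) by linarith]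
  rw [← mul_le_mul_iff_of_pos_left hD, mul_zero]
  calc _ = #(P \ Y) * (#(Y \ P) + ∑ j ∈ Y \ P, s j) - #(Y \ P) * ∑ i ∈ P \ Y, s i := by
        field_simp
        linear_combination (∑ i ∈ P \ Y, s i) * (habR - hmissedR)
    _ ≤ 0 := by linarith

theorem HasKMargin.le_of_comp_perm_notMem {n : ℕ} {s : Fin n → ℝ} {P : Finset (Fin n)}
    (h : HasKMargin s P k) (hk : k ≤ #P) {σ : Equiv.Perm (Fin n)} (hσ : Antitone (s ∘ σ))
    {i : Fin n} (hi : σ i ∉ P) : k ≤ i := by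
  set Q := P.filter fun q => 1 + s (σ i) ≤ s q
  have hkQ : k ≤ #Q := by
    by_contra! hQ
    have hT : #P - k + 1 ≤ #(P \ Q) := by
      rw [card_sdiff_of_subset (show Q ⊆ P from filter_subset _ _)]; omega
    have hbelow : ∀ q ∈ P \ Q, s q < 1 + s (σ i) := fun q hq => by
      obtain ⟨hqP, hqQ⟩ := mem_sdiff.1 hq
      simpa [Q, hqP] using hqQ
    have hlt := sum_lt_sum_of_nonempty (card_pos.1 (by omega)) hbelow
    rw [sum_const, nsmul_eq_mul] at hlt
    exact hlt.not_ge (h.card_mul_le_sum hk sdiff_subset hT hi)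
  exact hkQ.trans <| Fin.card_le_of_forall_lt_comp_perm hσ fun q hq => by
    linarith [(mem_filter.1 hq).2]

end KMargin

theorem k_margin_implies_avg_zero_general (n k : ℕ) (s : Fin n → ℝ) (P : Finset (Fin n))
    (hk : k < P.card) (σ : Equiv.Perm (Fin n))
    (hσ : ∀ i j : Fin n, i ≤ j → s (σ j) ≤ s (σ i))
    (h1 : (Finset.powersetCard k (Finset.univ : Finset (Fin n))).Nonempty)
    (hmargin : ∀ S ∈ Finset.powersetCard (P.card - k + 1) P, ∀ j : Fin n, j ∉ P →
      (1 / ((P.card : ℝ) - (k : ℝ) + 1)) * (∑ i ∈ S, s i) - s j ≥ 1) :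
    (Finset.powersetCard k (Finset.univ : Finset (Fin n))).sup' h1
        (fun Y => ((Y \ P).card : ℝ) + ((∑ i ∈ Y, s i) - ∑ i ∈ P, s i) +
          (((P.card : ℝ) - (k : ℝ)) / ((P.card : ℝ) - ((Y ∩ P).card : ℝ))) *
            ∑ i ∈ P \ Y, s i) ≤ 0 ∧
      ((Finset.univ.filter (fun i : Fin n => (i : ℕ) < k ∧ σ i ∉ P)).card : ℝ) = 0 := by
  have hm : HasKMargin s P k := hmargin
  refine ⟨sup'_le _ _ fun Y hY => hm.avgLossTerm_nonpos hk (mem_powersetCard.1 hY).2, ?_⟩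
  rw [Nat.cast_eq_zero, card_eq_zero, filter_eq_empty_iff]
  rintro i - ⟨hik, hiP⟩
  exact hik.not_ge (hm.le_of_comp_perm_notMem hk.le hσ hiP)

/-- Under the k-margin condition (the average score of every set of `n₊ - k + 1`
positives exceeds every negative score by at least 1), the avg surrogate is
nonpositive and consequently Prec@k is zero. -/
theorem k_margin_implies_avg_zero (n k : ℕ) (s : Fin n → ℝ) (P : Finset (Fin n))
    (hk : k < P.card) (σ : Equiv.Perm (Fin n))
    (hσ : ∀ i j : Fin n, i ≤ j → s (σ j) ≤ s (σ i))
    (hneg : ∃ j : Fin n, j ∉ P)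
    (h1 : (Finset.powersetCard k (Finset.univ : Finset (Fin n))).Nonempty)
    (hmargin : ∀ S ∈ Finset.powersetCard (P.card - k + 1) P, ∀ j : Fin n, j ∉ P →
      (1 / ((P.card : ℝ) - (k : ℝ) + 1)) * (∑ i ∈ S, s i) - s j ≥ 1) :
    (Finset.powersetCard k (Finset.univ : Finset (Fin n))).sup' h1
        (fun Y => ((Y \ P).card : ℝ) + ((∑ i ∈ Y, s i) - ∑ i ∈ P, s i) +
          (((P.card : ℝ) - (k : ℝ)) / ((P.card : ℝ) - ((Y ∩ P).card : ℝ))) *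
            ∑ i ∈ P \ Y, s i) ≤ 0 ∧
      ((Finset.univ.filter (fun i : Fin n => (i : ℕ) < k ∧ σ i ∉ P)).card : ℝ) = 0 :=
  k_margin_implies_avg_zero_general n k s P hk σ hσ h1 hmargin
end

section
/- Suppose real sequences Δ_1,...,Δ_T ≥ 0, and vectors w_0 = 0, w_1, ..., w_T in a Hilbert space, and a fixed vector w, satisfy: (i) ‖w_t‖² ≤ ‖w_{t-1}‖² + c·Δ_t for all t, with c > 0, and (ii) ⟨w_t, w⟩ ≥ ⟨w_{t-1}, w⟩ + Δ_t − L_t for all t, where L_t ≥ 0. Then Σ_{t=1}^T Δ_t ≤ (‖w‖·√c + √(Σ_{t=1}^T L_t))². -/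
open Finset

/-!
Chaining (ii) gives `⟪w_T, w⟫ ≥ x - l` with `x = ∑ Δ_t`, `l = ∑ L_t`, and chaining (i) gives
`‖w_T‖² ≤ c x`. Cauchy–Schwarz then yields `x - l ≤ ‖w‖ √c √x`, a quadratic inequality in `√x`
whose solution is `√x ≤ ‖w‖ √c + √l`.
-/

theorem le_add_sum_Icc_of_le_add {α : Type*} [AddCommMonoid α] [PartialOrder α]
    [IsOrderedAddMonoid α] {f g : ℕ → α} {n : ℕ}
    (h : ∀ t ∈ Icc 1 n, f t ≤ f (t - 1) + g t) : f n ≤ f 0 + ∑ t ∈ Icc 1 n, g t := by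
  induction n with
  | zero => simp
  | succ k ih =>
    have hstep : f (k + 1) ≤ f k + g (k + 1) := by
      simpa using h (k + 1) (by simp)
    have hprev : f k ≤ f 0 + ∑ t ∈ Icc 1 k, g t :=
      ih fun t ht ↦ h t (Icc_subset_Icc_right k.le_succ ht)
    calc f (k + 1) ≤ f k + g (k + 1) := hstep
      _ ≤ f 0 + ∑ t ∈ Icc 1 k, g t + g (k + 1) := by gcongr
      _ = f 0 + ∑ t ∈ Icc 1 (k + 1), g t := by rw [sum_Icc_succ_top (by omega), add_assoc]

theorem le_sq_add_sqrt_of_sub_le_mul_sqrt {x l a : ℝ} (ha : 0 ≤ a) (hl : 0 ≤ l)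
    (h : x - l ≤ a * √x) : x ≤ (a + √l) ^ 2 := by
  rcases lt_or_ge x 0 with hx | hx
  · exact hx.le.trans (by positivity)
  have hs := Real.sq_sqrt hx
  have hm := Real.sq_sqrt hl
  -- if `√x > a + √l` then `x - l = (√x - √l)(√x + √l) > a (√x + √l) ≥ a √x`
  have hsm : √x ≤ a + √l := by
    nlinarith [Real.sqrt_nonneg x, Real.sqrt_nonneg l]
  calc x = √x ^ 2 := hs.symm
    _ ≤ (a + √l) ^ 2 := by gcongr

theorem abstract_perceptron_bound_general {H : Type*} [NormedAddCommGroup H]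
    [InnerProductSpace ℝ H] (T : ℕ) (c : ℝ) (hc : 0 < c)
    (Δ L : ℕ → ℝ) (w : ℕ → H) (v : H) (hw0 : w 0 = 0)
    (hL : ∀ t ∈ Finset.Icc 1 T, 0 ≤ L t)
    (hnorm : ∀ t ∈ Finset.Icc 1 T, ‖w t‖ ^ 2 ≤ ‖w (t - 1)‖ ^ 2 + c * Δ t)
    (hinner : ∀ t ∈ Finset.Icc 1 T,
      (inner ℝ (w t) v : ℝ) ≥ (inner ℝ (w (t - 1)) v : ℝ) + Δ t - L t) :
    ∑ t ∈ Finset.Icc 1 T, Δ t ≤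
      (‖v‖ * Real.sqrt c + Real.sqrt (∑ t ∈ Finset.Icc 1 T, L t)) ^ 2 := by
  set x := ∑ t ∈ Icc 1 T, Δ t
  set l := ∑ t ∈ Icc 1 T, L t
  have hnormT : ‖w T‖ ^ 2 ≤ c * x := by
    simpa [hw0, ← mul_sum] using le_add_sum_Icc_of_le_add (f := fun t ↦ ‖w t‖ ^ 2) hnorm
  have hinnerT : x - l ≤ inner ℝ (w T) v := by
    have := le_add_sum_Icc_of_le_add (f := fun t ↦ -inner ℝ (w t) v) (g := fun t ↦ L t - Δ t)
      fun t ht ↦ by linarith [hinner t ht]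
    simp only [hw0, inner_zero_left, neg_zero, zero_add, sum_sub_distrib] at this
    linarith
  have hwT : ‖w T‖ ≤ √c * √x := Real.sqrt_mul hc.le x ▸ Real.le_sqrt_of_sq_le hnormT
  refine le_sq_add_sqrt_of_sub_le_mul_sqrt (by positivity) (sum_nonneg hL) ?_
  calc x - l ≤ inner ℝ (w T) v := hinnerT
    _ ≤ ‖w T‖ * ‖v‖ := real_inner_le_norm _ _
    _ ≤ √c * √x * ‖v‖ := by gcongr
    _ = ‖v‖ * √c * √x := by ring

/-- Abstract perceptron mistake bound. -/
theorem abstract_perceptron_bound {H : Type*} [NormedAddCommGroup H]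
    [InnerProductSpace ℝ H] (T : ℕ) (c : ℝ) (hc : 0 < c)
    (Δ L : ℕ → ℝ) (w : ℕ → H) (v : H) (hw0 : w 0 = 0)
    (hΔ : ∀ t ∈ Finset.Icc 1 T, 0 ≤ Δ t)
    (hL : ∀ t ∈ Finset.Icc 1 T, 0 ≤ L t)
    (hnorm : ∀ t ∈ Finset.Icc 1 T, ‖w t‖ ^ 2 ≤ ‖w (t - 1)‖ ^ 2 + c * Δ t)
    (hinner : ∀ t ∈ Finset.Icc 1 T,
      (inner ℝ (w t) v : ℝ) ≥ (inner ℝ (w (t - 1)) v : ℝ) + Δ t - L t) :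
    ∑ t ∈ Finset.Icc 1 T, Δ t ≤
      (‖v‖ * Real.sqrt c + Real.sqrt (∑ t ∈ Finset.Icc 1 T, L t)) ^ 2 :=
  abstract_perceptron_bound_general T c hc Δ L w v hw0 hL hnorm hinner
end

section
/- Fix κ ∈ (0,1], 0 ≤ β, β' ≤ κ < 1, p ∈ (0,1], and suppose all scores satisfy |s_i⁺|, |s_i⁻| ≤ 1. Define B(β) = (1/(κpn))·(((κ−β)/(1−β))·Σ_{i=1}^{βpn} s_i⁺ + Σ_{i=1}^{(κ−β)pn} s_i⁻) where s⁺, s⁻ are sorted decreasingly and all index counts are integers. Then |B(β) − B(β')| ≤ (2/(κ(1−κ)))·|β − β'|. -/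
/-!
Write `w(t) = (κ - t)/(1 - t) = 1 - (1 - κ)/(1 - t)` (`topWeight κ t`). On `t ≤ κ < 1` this weight
lies in `[0, 1]` and is `1/(1 - κ)`-Lipschitz, since `(1 - t)(1 - t') ≥ (1 - κ)²`. Splitting
`w(β) S_a - w(β') S_{a'} = (w(β) - w(β')) S_a + w(β') (S_a - S_{a'})`, and using that partial sums of
scores bounded by `1` change by at most the number of added or removed terms, `|a - a'| = |β - β'| p N`,
the difference of the brackets is at most `(κ/(1 - κ) + 2) p N |β - β'|`. Dividing by `κ p N` gives
the constant `1/(1 - κ) + 2/κ ≤ 2/(κ(1 - κ))`.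
-/

open Finset

lemma abs_sum_le_card_mul {ι : Type*} (s : Finset ι) {f : ι → ℝ} {C : ℝ}
    (hf : ∀ i ∈ s, |f i| ≤ C) : |∑ i ∈ s, f i| ≤ #s * C :=
  (abs_sum_le_sum_abs f s).trans (by simpa using sum_le_card_nsmul s _ C hf)

lemma abs_sum_range_sub_sum_range_le {f : ℕ → ℝ} {C : ℝ} (hf : ∀ i, |f i| ≤ C) (m n : ℕ) :
    |∑ i ∈ range m, f i - ∑ i ∈ range n, f i| ≤ |(m : ℝ) - n| * C := by
  wlog hnm : n ≤ m generalizing m n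
  · rw [abs_sub_comm, abs_sub_comm (m : ℝ)]
    exact this n m (le_of_not_ge hnm)
  rw [← sum_Ico_eq_sub f hnm, ← Nat.cast_sub hnm, Nat.abs_cast, ← Nat.card_Ico]
  exact abs_sum_le_card_mul _ fun i _ ↦ hf i

noncomputable def topWeight (κ t : ℝ) : ℝ := (κ - t) / (1 - t)

lemma topWeight_eq (κ : ℝ) {t : ℝ} (ht : t < 1) : topWeight κ t = 1 - (1 - κ) / (1 - t) := by
  rw [topWeight]
  field_simp [(sub_pos.2 ht).ne']
  ring

lemma abs_topWeight_le_one {κ t : ℝ} (hκ : κ < 1) (ht : t ≤ κ) : |topWeight κ t| ≤ 1 := by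
  have h1t : 0 < 1 - t := by linarith
  rw [abs_le, topWeight_eq κ (ht.trans_lt hκ)]
  have hq : (1 - κ) / (1 - t) ≤ 1 := (div_le_one h1t).2 (by linarith)
  have hq' : 0 ≤ (1 - κ) / (1 - t) := div_nonneg (by linarith) h1t.le
  constructor <;> linarith

lemma abs_topWeight_sub_topWeight_le {κ t t' : ℝ} (hκ : κ < 1) (ht : t ≤ κ) (ht' : t' ≤ κ) :
    |topWeight κ t - topWeight κ t'| ≤ |t - t'| / (1 - κ) := by
  have h1κ : 0 < 1 - κ := by linarith
  have h1t : 1 - κ ≤ 1 - t := by linarith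
  have h1t' : 1 - κ ≤ 1 - t' := by linarith
  have hden : 0 < (1 - t) * (1 - t') := mul_pos (h1κ.trans_le h1t) (h1κ.trans_le h1t')
  have hdiff : topWeight κ t - topWeight κ t' = (1 - κ) * (t' - t) / ((1 - t) * (1 - t')) := by
    rw [topWeight_eq κ (by linarith), topWeight_eq κ (by linarith)]
    field_simp [(h1κ.trans_le h1t).ne', (h1κ.trans_le h1t').ne']
    ring
  have hsq : (1 - κ) * (1 - κ) ≤ (1 - t) * (1 - t') := mul_le_mul h1t h1t' h1κ.le (by linarith)
  rw [hdiff, abs_div, abs_of_pos hden, abs_mul, abs_of_pos h1κ, abs_sub_comm t',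
    div_le_div_iff₀ hden h1κ]
  calc (1 - κ) * |t - t'| * (1 - κ) = |t - t'| * ((1 - κ) * (1 - κ)) := by ring
    _ ≤ |t - t'| * ((1 - t) * (1 - t')) := by gcongr

lemma abs_surrogate_sub_le {f g : ℕ → ℝ} (hf : ∀ i, |f i| ≤ 1) (hg : ∀ i, |g i| ≤ 1)
    {κ β β' c : ℝ} {a a' b : ℕ} (hκ1 : κ < 1) (hβ : β ≤ κ) (hβ' : β' ≤ κ)
    (hc : 0 ≤ c) (ha : (a : ℝ) = β * c) (ha' : (a' : ℝ) = β' * c) (hb : (b : ℝ) = κ * c) :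
    |(topWeight κ β * ∑ i ∈ range a, f i + ∑ i ∈ range (b - a), g i) -
        (topWeight κ β' * ∑ i ∈ range a', f i + ∑ i ∈ range (b - a'), g i)| ≤
      (κ / (1 - κ) + 2) * c * |β - β'| := by
  have hab : a ≤ b := by exact_mod_cast (show (a : ℝ) ≤ b by rw [ha, hb]; gcongr)
  have ha'b : a' ≤ b := by exact_mod_cast (show (a' : ℝ) ≤ b by rw [ha', hb]; gcongr)
  have hsize : |(a : ℝ) - a'| = |β - β'| * c := by
    rw [ha, ha', ← sub_mul, abs_mul, abs_of_nonneg hc]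
  have hS : |∑ i ∈ range a, f i| ≤ κ * c :=
    calc |∑ i ∈ range a, f i| ≤ #(range a) * 1 := abs_sum_le_card_mul _ fun i _ ↦ hf i
      _ ≤ b := by simpa using hab
      _ = κ * c := hb
  have hdS := abs_sum_range_sub_sum_range_le hf a a'
  have hdT := abs_sum_range_sub_sum_range_le hg (b - a) (b - a')
  rw [Nat.cast_sub hab, Nat.cast_sub ha'b, sub_sub_sub_cancel_left, abs_sub_comm (a' : ℝ)] at hdT
  calc _ = |(topWeight κ β - topWeight κ β') * ∑ i ∈ range a, f i +
          topWeight κ β' * (∑ i ∈ range a, f i - ∑ i ∈ range a', f i) +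
          (∑ i ∈ range (b - a), g i - ∑ i ∈ range (b - a'), g i)| := by congr 1; ring
    _ ≤ |topWeight κ β - topWeight κ β'| * |∑ i ∈ range a, f i| +
          |topWeight κ β'| * |∑ i ∈ range a, f i - ∑ i ∈ range a', f i| +
          |∑ i ∈ range (b - a), g i - ∑ i ∈ range (b - a'), g i| :=
        (abs_add_three _ _ _).trans_eq (by simp only [abs_mul])
    _ ≤ |β - β'| / (1 - κ) * (κ * c) + 1 * (|β - β'| * c * 1) + |β - β'| * c * 1 := by
        rw [← hsize]
        gcongr
        · exact abs_topWeight_sub_topWeight_le hκ1 hβ hβ'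
        · exact abs_topWeight_le_one hκ1 hβ'
    _ = (κ / (1 - κ) + 2) * c * |β - β'| := by ring

theorem B_lipschitz_in_beta_general (N : ℕ) (sp sm : ℕ → ℝ) (κ β β' p : ℝ) (a a' b : ℕ)
    (hκ0 : 0 < κ) (hκ1 : κ < 1)
    (hβκ : β ≤ κ) (hβ'κ : β' ≤ κ)
    (ha : (a : ℝ) = β * p * N) (ha' : (a' : ℝ) = β' * p * N) (hb : (b : ℝ) = κ * p * N)
    (hspb : ∀ i, |sp i| ≤ 1) (hsmb : ∀ i, |sm i| ≤ 1) :
    |(1 / (κ * p * N)) * (((κ - β) / (1 - β)) * ∑ i ∈ Finset.range a, sp i +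
          ∑ i ∈ Finset.range (b - a), sm i) -
      (1 / (κ * p * N)) * (((κ - β') / (1 - β')) * ∑ i ∈ Finset.range a', sp i +
          ∑ i ∈ Finset.range (b - a'), sm i)| ≤
    (2 / (κ * (1 - κ))) * |β - β'| := by
  rw [mul_assoc] at ha ha' hb
  have hc : 0 ≤ p * N := (mul_nonneg_iff_of_pos_left hκ0).1 (hb ▸ Nat.cast_nonneg b)
  have hbracket := abs_surrogate_sub_le hspb hsmb hκ1 hβκ hβ'κ hc ha ha' hb
  have h1κ : 0 < 1 - κ := by linarith
  rw [← mul_sub, abs_mul, mul_assoc κ, one_div, abs_inv, abs_of_nonneg (by positivity),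
    ← div_eq_inv_mul]
  refine div_le_of_le_mul₀ (by positivity) (by positivity) (hbracket.trans ?_)
  calc (κ / (1 - κ) + 2) * (p * N) * |β - β'|
      ≤ (2 / (1 - κ)) * (p * N) * |β - β'| := by
        gcongr
        rw [div_add' _ _ _ h1κ.ne', div_le_div_iff_of_pos_right h1κ]
        linarith
    _ = 2 / (κ * (1 - κ)) * |β - β'| * (κ * (p * N)) := by field_simp

/-- Lipschitz-in-β property of `B(β)`: with sorted, bounded scores,
`|B(β) - B(β')| ≤ (2/(κ(1-κ)))·|β - β'|`. -/
theorem B_lipschitz_in_beta (N : ℕ) (sp sm : ℕ → ℝ) (κ β β' p : ℝ) (a a' b : ℕ)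
    (hκ0 : 0 < κ) (hκ1 : κ < 1) (hp0 : 0 < p) (hp1 : p ≤ 1)
    (hβ0 : 0 ≤ β) (hβκ : β ≤ κ) (hβ'0 : 0 ≤ β') (hβ'κ : β' ≤ κ)
    (ha : (a : ℝ) = β * p * N) (ha' : (a' : ℝ) = β' * p * N) (hb : (b : ℝ) = κ * p * N)
    (hspb : ∀ i, |sp i| ≤ 1) (hsmb : ∀ i, |sm i| ≤ 1)
    (hspsort : ∀ i j : ℕ, i ≤ j → sp j ≤ sp i)
    (hsmsort : ∀ i j : ℕ, i ≤ j → sm j ≤ sm i) :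
    |(1 / (κ * p * N)) * (((κ - β) / (1 - β)) * ∑ i ∈ Finset.range a, sp i +
          ∑ i ∈ Finset.range (b - a), sm i) -
      (1 / (κ * p * N)) * (((κ - β') / (1 - β')) * ∑ i ∈ Finset.range a', sp i +
          ∑ i ∈ Finset.range (b - a'), sm i)| ≤
    (2 / (κ * (1 - κ))) * |β - β'| :=
  B_lipschitz_in_beta_general N sp sm κ β β' p a a' b hκ0 hκ1 hβκ hβ'κ ha ha' hb hspb hsmb
end
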